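/- arXiv:1508.04093 — 2 statements merged into one kernel-verified Lean document; each statement's English description precedes it below -/
import Mathlib

section
/- Let φ : ℝⁿ → [0, ∞] be positively homogeneous of degree 1 and suppose f = e^{-φ} is a probability density function on ℝⁿ. If X has density f, then the varentropy of X satisfies V(X) = Var(log f(X)) = n. In particular, the bound V(X) ≤ n for log-concave densities is sharp. -/
/-!
For `a = φ x` one has `a ^ k * e^{-a} = ∫_1^∞ a ^ (k + 1) * e^{-t a} dt`, while homogeneity of
`φ` and of Lebesgue measure give `∫ g (φ (t • x)) dx = t^{-n} ∫ g (φ x) dx`. Exchanging the two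
integrals yields the moment recursion `E[φ(X)^(k+1)] = (n + k) E[φ(X)^k]`. For `k = 0` this needs
the cone `{φ = 0}` to be null, which holds since it has finite measure and is dilation invariant.
Hence `E φ(X) = n` and `E φ(X)² = n (n + 1)`, and as `log f(X) = -φ(X)`, `V(X) = n`.
-/

open MeasureTheory
open scoped ENNReal

/-- The varentropy `V(X) = Var(log f(X)) = ∫ f (log f)² - (∫ f log f)²` of a random
vector `X` on `ℝⁿ` with density `f`. -/
noncomputable def varentropy {n : ℕ} (f : (Fin n → ℝ) → ℝ) : ℝ :=
  (∫ x, f x * (Real.log (f x)) ^ 2) - (∫ x, f x * Real.log (f x)) ^ 2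

open Module Set

namespace ENNReal

noncomputable def expNeg (a : ℝ≥0∞) : ℝ := if a = ∞ then 0 else Real.exp (-a.toReal)

noncomputable def expNegMulPow (k : ℕ) (a : ℝ≥0∞) : ℝ≥0∞ :=
  ENNReal.ofReal (expNeg a * a.toReal ^ k)

@[simp]
theorem expNeg_top : expNeg ∞ = 0 := if_pos rfl

theorem expNeg_of_ne_top {a : ℝ≥0∞} (ha : a ≠ ∞) : expNeg a = Real.exp (-a.toReal) :=
  if_neg ha

theorem expNeg_nonneg (a : ℝ≥0∞) : 0 ≤ expNeg a := by
  unfold expNeg; split_ifs <;> positivity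

@[fun_prop]
theorem measurable_expNeg : Measurable expNeg :=
  Measurable.ite (measurableSet_singleton ∞) measurable_const (by fun_prop)

@[fun_prop]
theorem measurable_expNegMulPow (k : ℕ) : Measurable (expNegMulPow k) := by
  unfold expNegMulPow; fun_prop

theorem toReal_expNegMulPow (k : ℕ) (a : ℝ≥0∞) :
    (expNegMulPow k a).toReal = expNeg a * a.toReal ^ k :=
  ENNReal.toReal_ofReal (mul_nonneg (expNeg_nonneg a) (by positivity))

theorem expNeg_mul_log_expNeg (a : ℝ≥0∞) :
    expNeg a * Real.log (expNeg a) = -(expNeg a * a.toReal) := by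
  unfold expNeg; split_ifs <;> simp

theorem expNeg_mul_log_expNeg_sq (a : ℝ≥0∞) :
    expNeg a * Real.log (expNeg a) ^ 2 = expNeg a * a.toReal ^ 2 := by
  unfold expNeg; split_ifs <;> simp

theorem lintegral_Ioi_one_expNegMulPow_succ {a : ℝ≥0∞} (ha : a ≠ 0) (k : ℕ) :
    ∫⁻ t in Ioi (1 : ℝ),
        ENNReal.ofReal (t ^ (k + 1))⁻¹ * expNegMulPow (k + 1) (ENNReal.ofReal t * a)
      = expNegMulPow k a := by
  unfold expNegMulPow
  rcases eq_or_ne a ∞ with rfl | ha_top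
  · rw [expNeg_top, zero_mul, ENNReal.ofReal_zero]
    refine (setLIntegral_congr_fun (g := fun _ => 0) measurableSet_Ioi fun t ht => ?_).trans
      lintegral_zero
    rw [ENNReal.mul_top (ENNReal.ofReal_pos.mpr (zero_lt_one.trans ht)).ne', expNeg_top,
      zero_mul, ENNReal.ofReal_zero, mul_zero]
  set c := a.toReal with hc_def
  have hc : 0 < c := ENNReal.toReal_pos ha ha_top
  calc ∫⁻ t in Ioi (1 : ℝ), ENNReal.ofReal (t ^ (k + 1))⁻¹ *
        ENNReal.ofReal (expNeg (ENNReal.ofReal t * a) * (ENNReal.ofReal t * a).toReal ^ (k + 1))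
      = ∫⁻ t in Ioi (1 : ℝ), ENNReal.ofReal (c ^ (k + 1) * Real.exp (-c * t)) := by
        refine setLIntegral_congr_fun measurableSet_Ioi fun t ht => ?_
        have ht0 : 0 < t := zero_lt_one.trans ht
        have hta : (ENNReal.ofReal t * a).toReal = t * c := by
          rw [ENNReal.toReal_mul, ENNReal.toReal_ofReal ht0.le]
        rw [expNeg_of_ne_top (ENNReal.mul_ne_top ENNReal.ofReal_ne_top ha_top), hta,
          ← ENNReal.ofReal_mul (by positivity)]
        congr 1
        field_simp
        ring
    _ = ENNReal.ofReal (∫ t in Ioi (1 : ℝ), c ^ (k + 1) * Real.exp (-c * t)) :=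
        (ofReal_integral_eq_lintegral_ofReal
          ((integrableOn_exp_mul_Ioi (neg_lt_zero.mpr hc) 1).const_mul _)
          (ae_of_all _ fun t => by positivity)).symm
    _ = ENNReal.ofReal (expNeg a * c ^ k) := by
        rw [integral_const_mul, integral_exp_mul_Ioi (neg_lt_zero.mpr hc), pow_succ,
          expNeg_of_ne_top ha_top, ← hc_def]
        congr 1
        field_simp

end ENNReal

open ENNReal

theorem lintegral_Ioi_one_inv_pow_succ {m : ℕ} (hm : 0 < m) :
    ∫⁻ t in Ioi (1 : ℝ), ENNReal.ofReal (t ^ (m + 1))⁻¹ = (m : ℝ≥0∞)⁻¹ := by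
  have hexp : -((m : ℝ) + 1) < -1 := by
    have : (0 : ℝ) < m := by exact_mod_cast hm
    linarith
  calc ∫⁻ t in Ioi (1 : ℝ), ENNReal.ofReal (t ^ (m + 1))⁻¹
      = ∫⁻ t in Ioi (1 : ℝ), ENNReal.ofReal (t ^ (-((m : ℝ) + 1))) := by
        refine setLIntegral_congr_fun measurableSet_Ioi fun t ht => ?_
        rw [Real.rpow_neg (zero_le_one.trans (le_of_lt ht)), ← Nat.cast_succ, Real.rpow_natCast]
    _ = ENNReal.ofReal (∫ t in Ioi (1 : ℝ), t ^ (-((m : ℝ) + 1))) :=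
        (ofReal_integral_eq_lintegral_ofReal (integrableOn_Ioi_rpow_of_lt hexp one_pos)
          (ae_restrict_of_forall_mem measurableSet_Ioi fun t ht =>
            Real.rpow_nonneg (zero_le_one.trans (le_of_lt ht)) _)).symm
    _ = (m : ℝ≥0∞)⁻¹ := by
        rw [integral_Ioi_rpow_of_lt hexp one_pos, Real.one_rpow,
          show -((m : ℝ) + 1) + 1 = -m by ring, neg_div_neg_eq, one_div,
          ENNReal.ofReal_inv_of_pos (by exact_mod_cast hm), ENNReal.ofReal_natCast]

def IsPosHomogeneous {E : Type*} [SMul ℝ E] (φ : E → ℝ≥0∞) : Prop :=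
  ∀ t : ℝ, 0 < t → ∀ x, φ (t • x) = ENNReal.ofReal t * φ x

namespace IsPosHomogeneous

variable {E : Type*} [AddCommGroup E] [Module ℝ E] {φ : E → ℝ≥0∞}

theorem apply_zero_eq_zero_or_eq_top (hhom : IsPosHomogeneous φ) : φ 0 = 0 ∨ φ 0 = ∞ := by
  refine (ENNReal.toReal_eq_zero_iff _).mp ?_
  have h := congrArg ENNReal.toReal (hhom 2 two_pos 0)
  rw [smul_zero, ENNReal.toReal_mul, ENNReal.toReal_ofReal zero_le_two] at h
  linarith

theorem log_expNeg_apply_zero (hhom : IsPosHomogeneous φ) : Real.log (expNeg (φ 0)) = 0 := by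
  rcases hhom.apply_zero_eq_zero_or_eq_top with h | h <;> simp [h, expNeg_of_ne_top]

end IsPosHomogeneous

section Haar

variable {E : Type*} [NormedAddCommGroup E] [NormedSpace ℝ E] [MeasurableSpace E]
  [BorelSpace E] [FiniteDimensional ℝ E] (μ : Measure E) [μ.IsAddHaarMeasure]

theorem lintegral_comp_smul_of_pos {g : E → ℝ≥0∞} (hg : Measurable g) {t : ℝ}
    (ht : 0 < t) : ∫⁻ x, g (t • x) ∂μ = ENNReal.ofReal (t ^ finrank ℝ E)⁻¹ * ∫⁻ x, g x ∂μ := by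
  rw [← lintegral_map hg (measurable_const_smul t), Measure.map_addHaar_smul μ ht.ne',
    lintegral_smul_measure, abs_of_pos (by positivity), smul_eq_mul]

theorem addHaar_eq_zero_of_preimage_smul_eq {s : Set E} {r : ℝ} (hr : 1 < r)
    (hs : (r • ·) ⁻¹' s = s) (hμs : μ s ≠ ∞) (hE : 0 < finrank ℝ E) : μ s = 0 := by
  have h := Measure.addHaar_preimage_smul μ (zero_lt_one.trans hr).ne' s
  rw [hs] at h
  have hlt : ENNReal.ofReal |(r ^ finrank ℝ E)⁻¹| < 1 := by
    rw [ENNReal.ofReal_lt_one, abs_inv, abs_pow, abs_of_pos (zero_lt_one.trans hr)]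
    exact inv_lt_one_of_one_lt₀ (one_lt_pow₀ hr hE.ne')
  by_contra h0
  have := ENNReal.mul_lt_mul_left h0 hμs hlt
  rw [one_mul, ← h] at this
  exact lt_irrefl _ this

variable {μ} {φ : E → ℝ≥0∞}

namespace IsPosHomogeneous

theorem measure_setOf_eq_zero (hhom : IsPosHomogeneous φ) (hφ : Measurable φ)
    (hE : 0 < finrank ℝ E) (hfin : ∫⁻ x, expNegMulPow 0 (φ x) ∂μ ≠ ∞) :
    μ {x | φ x = 0} = 0 := by
  have hS : MeasurableSet {x | φ x = 0} := hφ (measurableSet_singleton 0)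
  refine addHaar_eq_zero_of_preimage_smul_eq μ one_lt_two ?_ (ne_top_of_le_ne_top hfin ?_) hE
  · ext x
    simp [hhom 2 two_pos x]
  · calc μ {x | φ x = 0} = ∫⁻ x in {x | φ x = 0}, expNegMulPow 0 (φ x) ∂μ := by
          rw [← setLIntegral_one]
          refine setLIntegral_congr_fun hS fun x (hx : φ x = 0) => ?_
          simp [hx, expNegMulPow, expNeg_of_ne_top]
      _ ≤ ∫⁻ x, expNegMulPow 0 (φ x) ∂μ := setLIntegral_le_lintegral _ _

theorem lintegral_expNegMulPow_succ (hhom : IsPosHomogeneous φ) (hφ : Measurable φ)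
    (hnull : μ {x | φ x = 0} = 0) {k : ℕ} (hk : 0 < finrank ℝ E + k) :
    ∫⁻ x, expNegMulPow (k + 1) (φ x) ∂μ
      = (finrank ℝ E + k : ℝ≥0∞) * ∫⁻ x, expNegMulPow k (φ x) ∂μ := by
  have hpos : ∀ᵐ x ∂μ, φ x ≠ 0 := ae_iff.mpr (by simpa using hnull)
  have hrec : ∫⁻ x, expNegMulPow k (φ x) ∂μ
      = (finrank ℝ E + k : ℝ≥0∞)⁻¹ * ∫⁻ x, expNegMulPow (k + 1) (φ x) ∂μ :=
    calc ∫⁻ x, expNegMulPow k (φ x) ∂μ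
        = ∫⁻ x, (∫⁻ t in Ioi (1 : ℝ), ENNReal.ofReal (t ^ (k + 1))⁻¹ *
            expNegMulPow (k + 1) (ENNReal.ofReal t * φ x)) ∂μ := by
          refine lintegral_congr_ae ?_
          filter_upwards [hpos] with x hx
          exact (lintegral_Ioi_one_expNegMulPow_succ hx k).symm
      _ = ∫⁻ t in Ioi (1 : ℝ), ∫⁻ x, ENNReal.ofReal (t ^ (k + 1))⁻¹ *
            expNegMulPow (k + 1) (φ (t • x)) ∂μ := by
          rw [lintegral_lintegral_swap (by fun_prop)]
          refine setLIntegral_congr_fun measurableSet_Ioi fun t ht => ?_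
          simp only [hhom t (zero_lt_one.trans ht)]
      _ = ∫⁻ t in Ioi (1 : ℝ), ENNReal.ofReal (t ^ (finrank ℝ E + k + 1))⁻¹ *
            ∫⁻ x, expNegMulPow (k + 1) (φ x) ∂μ := by
          refine setLIntegral_congr_fun measurableSet_Ioi fun t (ht : 1 < t) => ?_
          have ht0 : 0 < t := zero_lt_one.trans ht
          rw [lintegral_const_mul _ (by fun_prop), lintegral_comp_smul_of_pos μ
              (g := fun x => expNegMulPow (k + 1) (φ x)) (by fun_prop) ht0,
            ← mul_assoc, ← ENNReal.ofReal_mul (by positivity), ← mul_inv, ← pow_add,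
            add_comm (k + 1), ← add_assoc]
      _ = (finrank ℝ E + k : ℝ≥0∞)⁻¹ * ∫⁻ x, expNegMulPow (k + 1) (φ x) ∂μ := by
          rw [lintegral_mul_const _ (by fun_prop), lintegral_Ioi_one_inv_pow_succ hk,
            Nat.cast_add]
  rw [hrec, ← mul_assoc, ENNReal.mul_inv_cancel (by exact_mod_cast hk.ne') (by simp), one_mul]

end IsPosHomogeneous

end Haar

/-- If `φ : ℝⁿ → [0, ∞]` is positively homogeneous of degree 1 and `f = e^{-φ}` is a
probability density on `ℝⁿ`, then a random vector `X` with density `f` satisfies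
`V(X) = Var(log f(X)) = n`; in particular the bound `V(X) ≤ n` for log-concave
densities is sharp. -/
theorem varentropy_eq_dim_of_homogeneous_potential {n : ℕ}
    (φ : (Fin n → ℝ) → ℝ≥0∞) (hφ_meas : Measurable φ)
    (hφ_hom : ∀ t : ℝ, 0 < t → ∀ x : Fin n → ℝ, φ (t • x) = ENNReal.ofReal t * φ x)
    (f : (Fin n → ℝ) → ℝ)
    (hf : ∀ x, f x = if φ x = ∞ then 0 else Real.exp (-(φ x).toReal))
    (hf_prob : ∫ x, f x = 1) :
    varentropy f = n := by
  obtain rfl : f = fun x => expNeg (φ x) := funext hf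
  rcases Nat.eq_zero_or_pos n with rfl | hn
  · have hlog (x : Fin 0 → ℝ) : Real.log (expNeg (φ x)) = 0 := by
      rw [Subsingleton.elim x 0]
      exact IsPosHomogeneous.log_expNeg_apply_zero hφ_hom
    simp [varentropy, hlog]
  set M : ℕ → ℝ≥0∞ := fun k => ∫⁻ x, expNegMulPow k (φ x)
  have hM (k : ℕ) : ∫ x, expNeg (φ x) * (φ x).toReal ^ k = (M k).toReal := by
    simp only [M, ← toReal_expNegMulPow]
    exact integral_toReal (by fun_prop) (ae_of_all _ fun _ => ENNReal.ofReal_lt_top)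
  have hM0 : M 0 = 1 := by
    rw [← ENNReal.toReal_eq_one_iff, ← hM 0, ← hf_prob]
    simp
  have hdim : 0 < finrank ℝ (Fin n → ℝ) := by simpa using hn
  have hnull := IsPosHomogeneous.measure_setOf_eq_zero hφ_hom hφ_meas hdim
    (hM0.trans_ne ENNReal.one_ne_top)
  have hM_succ (k : ℕ) : M (k + 1) = (n + k) * M k := by
    simpa using IsPosHomogeneous.lintegral_expNegMulPow_succ hφ_hom hφ_meas hnull
      (k := k) (by omega)
  have hM1 : M 1 = n := by simpa [hM0] using hM_succ 0
  have hM2 : M 2 = (n * (n + 1) : ℕ) := by rw [hM_succ 1, hM1]; push_cast; ring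
  have hI1 : ∫ x, expNeg (φ x) * (φ x).toReal = n := by simpa [hM1] using hM 1
  have hI2 : ∫ x, expNeg (φ x) * (φ x).toReal ^ 2 = n * (n + 1) := by
    rw [hM 2, hM2, ENNReal.toReal_natCast, Nat.cast_mul, Nat.cast_succ]
  simp only [varentropy, expNeg_mul_log_expNeg, expNeg_mul_log_expNeg_sq, integral_neg, hI1, hI2]
  ring
end

section
/- Let X be a random vector in ℝⁿ with density f such that f ∈ L^α(ℝⁿ) for each α > 0. For α > 0 let X_α have density f_α = f^α / ∫ f^α, and set K = sup_{α>0} V(X_α), where V denotes varentropy. Then for every β ∈ ℝ, E[e^{β(h̃(X) - h(X))}] ≤ e^{K r(-β)}, where r(u) = u - log(1+u) for u > -1 and r(u) = +∞ for u ≤ -1. -/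
open MeasureTheory
open scoped ENNReal

/-- The entropy `h(X) = -∫ f log f` of a random vector `X` on `ℝⁿ` with density `f`. -/
noncomputable def entropy {n : ℕ} (f : (Fin n → ℝ) → ℝ) : ℝ :=
  -∫ x, f x * Real.log (f x)

/-- The tilted density `f_α = f^α / ∫ f^α`. -/
noncomputable def tilt {n : ℕ} (f : (Fin n → ℝ) → ℝ) (α : ℝ) : (Fin n → ℝ) → ℝ :=
  fun x => f x ^ α / ∫ y, f y ^ α

/-- The rate function `r(u) = u - log(1+u)` for `u > -1`, and `r(u) = +∞` for `u ≤ -1`. -/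
noncomputable def rate (u : ℝ) : EReal :=
  if -1 < u then ((u - Real.log (1 + u) : ℝ) : EReal) else ⊤

open Real Set
open scoped Nat

/-!
Write `L(t) = log ∫ f^t`. Then `L(1) = 0`, `L'(1) = ∫ f log f = -h(X)`, and `L''(t)` is the
variance of `log f` under the tilted density `f_t`, so that `t² L''(t) = V(X_t) ≤ K`. The function
`K (t - 1 - log t)` has second derivative `K / t²` and vanishes to second order at `t = 1`, hence
`L` lies below its tangent at `1` plus `K (t - 1 - log t)`:
`L(α) ≤ (1 - α) h(X) + K (α - 1 - log α)` for all `α > 0`. As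
`E[e^{β(h̃(X) - h(X))}] = e^{-β h(X)} ∫ f^{1-β}`, the choice `α = 1 - β` is the claim for `β < 1`.
For `β ≥ 1` the bound is `+∞` unless `K = 0`; then `V(X) = 0` forces `log f = -h(X)` almost
everywhere on `{f > 0}`, and the moment generating function equals `1`.
-/

lemma abs_log_pow_le {x δ : ℝ} (hx : 0 < x) (hδ : 0 < δ) (m : ℕ) :
    |log x| ^ m ≤ m ! / δ ^ m * (x ^ δ + x ^ (-δ)) := by
  have hexp : (δ * |log x|) ^ m / m ! ≤ exp |δ * log x| := by
    rw [abs_mul, abs_of_pos hδ]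
    exact pow_div_factorial_le_exp _ (by positivity) m
  calc |log x| ^ m = m ! / δ ^ m * ((δ * |log x|) ^ m / m !) := by
        field_simp; ring
    _ ≤ m ! / δ ^ m * exp |δ * log x| := by gcongr
    _ ≤ m ! / δ ^ m * (x ^ δ + x ^ (-δ)) := by
        gcongr
        rw [rpow_def_of_pos hx, rpow_def_of_pos hx, mul_neg, mul_comm (log x)]
        exact exp_abs_le _

lemma rpow_le_rpow_add_rpow {x a b s : ℝ} (hx : 0 ≤ x) (ha : 0 ≤ a) (has : a ≤ s) (hsb : s ≤ b) :
    x ^ s ≤ x ^ a + x ^ b := by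
  rcases le_total x 1 with hx1 | hx1
  · linarith [rpow_le_rpow_of_exponent_ge' hx hx1 ha has, rpow_nonneg hx b]
  · linarith [rpow_le_rpow_of_exponent_le hx1 hsb, rpow_nonneg hx a]

lemma rpow_mul_abs_log_pow_le {x a b t δ : ℝ} (hx : 0 ≤ x) (ha : 0 ≤ a) (hδ : 0 < δ)
    (hat : a ≤ t - δ) (htb : t + δ ≤ b) (m : ℕ) :
    x ^ t * |log x| ^ m ≤ 2 * (m ! / δ ^ m) * (x ^ a + x ^ b) := by
  rcases hx.eq_or_lt with rfl | hx
  · rw [zero_rpow (by linarith), zero_mul]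
    positivity
  calc x ^ t * |log x| ^ m ≤ x ^ t * (m ! / δ ^ m * (x ^ δ + x ^ (-δ))) := by
        gcongr; exact abs_log_pow_le hx hδ m
    _ = m ! / δ ^ m * (x ^ (t + δ) + x ^ (t - δ)) := by
        rw [rpow_add hx, rpow_sub hx, rpow_neg hx.le]; field_simp
    _ ≤ m ! / δ ^ m * ((x ^ a + x ^ b) + (x ^ a + x ^ b)) := by
        gcongr
        · exact rpow_le_rpow_add_rpow hx.le ha (by linarith) htb
        · exact rpow_le_rpow_add_rpow hx.le ha hat (by linarith)
    _ = 2 * (m ! / δ ^ m) * (x ^ a + x ^ b) := by ring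

lemma rpow_div_mul_log_rpow_div_pow {y t : ℝ} (M : ℝ) (hy : 0 ≤ y) (ht : t ≠ 0) (k : ℕ) :
    y ^ t / M * log (y ^ t / M) ^ k = y ^ t * (t * log y - log M) ^ k / M := by
  rcases hy.eq_or_lt with rfl | hy
  · simp [zero_rpow ht]
  rcases eq_or_ne M 0 with rfl | hM
  · simp
  rw [log_div (rpow_pos_of_pos hy t).ne' hM, log_rpow hy, div_mul_eq_mul_div]

lemma mul_exp_mul_neg_log_sub {y β : ℝ} (c : ℝ) (hy : 0 ≤ y) (hβ : β ≠ 1) :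
    y * exp (β * (-log y - c)) = exp (-(β * c)) * y ^ (1 - β) := by
  rcases hy.eq_or_lt with rfl | hy
  · simp [zero_rpow (sub_ne_zero.2 hβ.symm)]
  rw [rpow_def_of_pos hy, ← exp_log hy, ← exp_add, ← exp_add, log_exp]
  ring_nf

lemma le_tangent_add_of_deriv2_le_div_sq {g g' g'' : ℝ → ℝ} {K : ℝ}
    (hg : ∀ t, 0 < t → HasDerivAt g (g' t) t) (hg' : ∀ t, 0 < t → HasDerivAt g' (g'' t) t)
    (hg'' : ∀ t, 0 < t → g'' t ≤ K / t ^ 2) {α : ℝ} (hα : 0 < α) :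
    g α ≤ g 1 + g' 1 * (α - 1) + K * (α - 1 - log α) := by
  set G : ℝ → ℝ := fun t => g 1 + g' 1 * (t - 1) + K * (t - 1 - log t) - g t
  set G' : ℝ → ℝ := fun t => g' 1 + K * (1 - t⁻¹) - g' t
  have hG : ∀ t, 0 < t → HasDerivAt G (G' t) t := fun t ht => by
    refine (((((hasDerivAt_id' t).sub_const 1).const_mul (g' 1)).const_add (g 1)).add
      ((((hasDerivAt_id' t).sub_const 1).sub (hasDerivAt_log ht.ne')).const_mul K) |>.sub
      (hg t ht)).congr_deriv ?_
    simp only [G']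
    ring
  have hG' : ∀ t, 0 < t → HasDerivAt G' (K / t ^ 2 - g'' t) t := fun t ht => by
    refine ((((hasDerivAt_inv ht.ne').const_sub 1).const_mul K).const_add (g' 1) |>.sub
      (hg' t ht)).congr_deriv ?_
    field_simp
  have hconvex : ConvexOn ℝ (Ioi 0) G := by
    refine convexOn_of_hasDerivWithinAt2_nonneg (f' := G') (f'' := fun t => K / t ^ 2 - g'' t)
      (convex_Ioi 0)
      (fun t ht => (hG t ht).continuousAt.continuousWithinAt) ?_ ?_ ?_ <;>
      simp only [interior_Ioi, mem_Ioi]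
    · exact fun t ht => (hG t ht).hasDerivWithinAt
    · exact fun t ht => (hG' t ht).hasDerivWithinAt
    · exact fun t ht => sub_nonneg.2 (hg'' t ht)
  have hmin : IsMinOn G (Ioi 0) 1 := by
    refine hconvex.isMinOn_of_rightDeriv_eq_zero (by simp) ?_
    rw [((hG 1 one_pos).hasDerivWithinAt).derivWithin (uniqueDiffWithinAt_Ioi 1)]
    simp [G']
  have hG1 : G 1 = 0 := by simp [G]
  have := isMinOn_iff.1 hmin α hα
  simp only [G] at this hG1
  linarith

section IntegralRpow

variable {Ω : Type*} [MeasurableSpace Ω] {μ : Measure Ω} {f : Ω → ℝ}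

lemma aestronglyMeasurable_rpow_mul_log_pow
    (hf_int : ∀ t : ℝ, 0 < t → Integrable (fun x => f x ^ t) μ) (t : ℝ) (m : ℕ) :
    AEStronglyMeasurable (fun x => f x ^ t * log (f x) ^ m) μ := by
  have hf : AEMeasurable f μ := by simpa using (hf_int 1 one_pos).aemeasurable
  exact ((hf.pow_const t).mul (hf.log.pow_const m)).aestronglyMeasurable

lemma integrable_rpow_mul_log_pow (hf_nonneg : ∀ x, 0 ≤ f x)
    (hf_int : ∀ t : ℝ, 0 < t → Integrable (fun x => f x ^ t) μ) (m : ℕ) {t : ℝ} (ht : 0 < t) :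
    Integrable (fun x => f x ^ t * log (f x) ^ m) μ := by
  refine ((((hf_int (t / 2) (by positivity)).add (hf_int (3 * t / 2) (by positivity))).const_mul
    (2 * (m ! / (t / 2) ^ m)))).mono' (aestronglyMeasurable_rpow_mul_log_pow hf_int t m)
    (ae_of_all _ fun x => ?_)
  rw [norm_mul, norm_pow, Real.norm_eq_abs, Real.norm_eq_abs, abs_rpow_of_nonneg (hf_nonneg x),
    abs_of_nonneg (hf_nonneg x)]
  exact rpow_mul_abs_log_pow_le (hf_nonneg x) (by positivity) (by positivity) (by linarith)
    (by linarith) m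

lemma hasDerivAt_integral_rpow_mul_log_pow (hf_nonneg : ∀ x, 0 ≤ f x)
    (hf_int : ∀ t : ℝ, 0 < t → Integrable (fun x => f x ^ t) μ) (m : ℕ) {t : ℝ} (ht : 0 < t) :
    HasDerivAt (fun s => ∫ x, f x ^ s * log (f x) ^ m ∂μ)
      (∫ x, f x ^ t * log (f x) ^ (m + 1) ∂μ) t := by
  have hnhds : Ioo (t / 2) (3 * t / 2) ∈ nhds t := Ioo_mem_nhds (by linarith) (by linarith)
  refine (hasDerivAt_integral_of_dominated_loc_of_deriv_le hnhds
    (F' := fun s x => f x ^ s * log (f x) ^ (m + 1))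
    (Filter.Eventually.of_forall fun s => aestronglyMeasurable_rpow_mul_log_pow hf_int s m)
    (integrable_rpow_mul_log_pow hf_nonneg hf_int m ht)
    (aestronglyMeasurable_rpow_mul_log_pow hf_int t (m + 1))
    (bound := fun x => 2 * ((m + 1)! / (t / 4) ^ (m + 1)) * (f x ^ (t / 4) + f x ^ (2 * t)))
    (ae_of_all _ fun x s hs => ?_)
    (((hf_int (t / 4) (by positivity)).add (hf_int (2 * t) (by positivity))).const_mul _)
    (ae_of_all _ fun x s hs => ?_)).2
  · obtain ⟨hs₁, hs₂⟩ := hs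
    rw [norm_mul, norm_pow, Real.norm_eq_abs, Real.norm_eq_abs, abs_rpow_of_nonneg (hf_nonneg x),
      abs_of_nonneg (hf_nonneg x)]
    exact rpow_mul_abs_log_pow_le (hf_nonneg x) (by positivity) (by positivity) (by linarith)
      (by linarith) (m + 1)
  · have hs : 0 < s := by linarith [hs.1]
    rcases (hf_nonneg x).eq_or_lt with hx | hx
    · rw [← hx, zero_rpow hs.ne', zero_mul]
      refine (hasDerivAt_const s (0 : ℝ)).congr_of_eventuallyEq ?_
      filter_upwards [Ioi_mem_nhds hs] with r hr
      rw [zero_rpow hr.ne', zero_mul]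
    · refine ((hasStrictDerivAt_const_rpow hx s).hasDerivAt.mul_const _).congr_deriv ?_
      ring

lemma integral_rpow_pos (hf_nonneg : ∀ x, 0 ≤ f x)
    (hf_int : ∀ t : ℝ, 0 < t → Integrable (fun x => f x ^ t) μ) (hf_pos : 0 < ∫ x, f x ∂μ)
    {t : ℝ} (ht : 0 < t) : 0 < ∫ x, f x ^ t ∂μ := by
  have hf : Integrable f μ := by simpa using hf_int 1 one_pos
  rw [integral_pos_iff_support_of_nonneg hf_nonneg hf] at hf_pos
  rw [integral_pos_iff_support_of_nonneg (fun x => rpow_nonneg (hf_nonneg x) t) (hf_int t ht)]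
  have hsupp : Function.support (fun x => f x ^ t) = Function.support f := by
    ext x
    simp [rpow_eq_zero (hf_nonneg x) ht.ne']
  rwa [hsupp]

lemma integrable_mul_log_pow (hf_nonneg : ∀ x, 0 ≤ f x)
    (hf_int : ∀ t : ℝ, 0 < t → Integrable (fun x => f x ^ t) μ) (m : ℕ) :
    Integrable (fun x => f x * log (f x) ^ m) μ := by
  simpa using integrable_rpow_mul_log_pow hf_nonneg hf_int m one_pos

lemma integrable_mul_neg_log_sub_sq (hf_nonneg : ∀ x, 0 ≤ f x)
    (hf_int : ∀ t : ℝ, 0 < t → Integrable (fun x => f x ^ t) μ) (c : ℝ) :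
    Integrable (fun x => f x * (-log (f x) - c) ^ 2) μ := by
  refine (((integrable_mul_log_pow hf_nonneg hf_int 2).add
    ((integrable_mul_log_pow hf_nonneg hf_int 1).const_mul (2 * c))).add
    ((integrable_mul_log_pow hf_nonneg hf_int 0).const_mul (c ^ 2))).congr
    (ae_of_all _ fun x => ?_)
  simp only [Pi.add_apply]
  ring

lemma hasDerivAt_log_integral_rpow (hf_nonneg : ∀ x, 0 ≤ f x)
    (hf_int : ∀ t : ℝ, 0 < t → Integrable (fun x => f x ^ t) μ) (hf_pos : 0 < ∫ x, f x ∂μ)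
    {t : ℝ} (ht : 0 < t) :
    HasDerivAt (fun s => log (∫ x, f x ^ s ∂μ))
      ((∫ x, f x ^ t * log (f x) ∂μ) / ∫ x, f x ^ t ∂μ) t := by
  have h := hasDerivAt_integral_rpow_mul_log_pow hf_nonneg hf_int 0 ht
  simp only [pow_zero, mul_one, zero_add, pow_one] at h
  exact h.log (integral_rpow_pos hf_nonneg hf_int hf_pos ht).ne'

lemma hasDerivAt_integral_rpow_mul_log_div (hf_nonneg : ∀ x, 0 ≤ f x)
    (hf_int : ∀ t : ℝ, 0 < t → Integrable (fun x => f x ^ t) μ) (hf_pos : 0 < ∫ x, f x ∂μ)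
    {t : ℝ} (ht : 0 < t) :
    HasDerivAt (fun s => (∫ x, f x ^ s * log (f x) ∂μ) / ∫ x, f x ^ s ∂μ)
      (((∫ x, f x ^ t * log (f x) ^ 2 ∂μ) * (∫ x, f x ^ t ∂μ)
        - (∫ x, f x ^ t * log (f x) ∂μ) ^ 2) / (∫ x, f x ^ t ∂μ) ^ 2) t := by
  have hN := hasDerivAt_integral_rpow_mul_log_pow hf_nonneg hf_int 1 ht
  have hM := hasDerivAt_integral_rpow_mul_log_pow hf_nonneg hf_int 0 ht
  simp only [pow_zero, mul_one, zero_add, pow_one] at hN hM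
  exact (hN.div hM (integral_rpow_pos hf_nonneg hf_int hf_pos ht).ne').congr_deriv (by ring)

end IntegralRpow

section Density

variable {n : ℕ} {f : (Fin n → ℝ) → ℝ}

lemma varentropy_tilt (hf_nonneg : ∀ x, 0 ≤ f x)
    (hf_int : ∀ t : ℝ, 0 < t → Integrable (fun x => f x ^ t)) (hf_pos : 0 < ∫ x, f x)
    {t : ℝ} (ht : 0 < t) :
    varentropy (tilt f t) = t ^ 2 * (((∫ x, f x ^ t * log (f x) ^ 2) * (∫ x, f x ^ t)
        - (∫ x, f x ^ t * log (f x)) ^ 2) / (∫ x, f x ^ t) ^ 2) := by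
  set M := ∫ x, f x ^ t
  set N := ∫ x, f x ^ t * log (f x)
  set P := ∫ x, f x ^ t * log (f x) ^ 2
  have hM : M ≠ 0 := (integral_rpow_pos hf_nonneg hf_int hf_pos ht).ne'
  have i0 := hf_int t ht
  have i1 := integrable_rpow_mul_log_pow hf_nonneg hf_int 1 ht
  have i2 := integrable_rpow_mul_log_pow hf_nonneg hf_int 2 ht
  simp only [pow_one] at i1
  have htilt (k : ℕ) : ∫ x, tilt f t x * log (tilt f t x) ^ k
      = (∫ x, f x ^ t * (t * log (f x) - log M) ^ k) / M := by
    show ∫ x, f x ^ t / M * log (f x ^ t / M) ^ k = _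
    simp only [rpow_div_mul_log_rpow_div_pow M (hf_nonneg _) ht.ne', integral_div]
  have hexp1 : ∫ x, f x ^ t * (t * log (f x) - log M) = t * N - log M * M := by
    simp only [mul_sub, mul_left_comm _ t, mul_comm _ (log M)]
    rw [integral_sub (i1.const_mul t) (i0.const_mul _), integral_const_mul, integral_const_mul]
  have hexp2 : ∫ x, f x ^ t * (t * log (f x) - log M) ^ 2
      = t ^ 2 * P - 2 * t * log M * N + log M ^ 2 * M := by
    have : (fun x => f x ^ t * (t * log (f x) - log M) ^ 2) = fun x =>
        t ^ 2 * (f x ^ t * log (f x) ^ 2) - 2 * t * log M * (f x ^ t * log (f x))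
          + log M ^ 2 * f x ^ t := funext fun x => by ring
    rw [this, integral_add, integral_sub, integral_const_mul, integral_const_mul,
      integral_const_mul]
    exacts [i2.const_mul _, i1.const_mul _, (i2.const_mul _).sub (i1.const_mul _),
      i0.const_mul _]
  have h1 := htilt 1
  simp only [pow_one] at h1
  rw [varentropy, htilt 2, h1, hexp1, hexp2]
  field_simp
  ring

lemma tilt_one (hf_prob : ∫ x, f x = 1) : tilt f 1 = f := by
  ext x
  simp [tilt, hf_prob]

lemma varentropy_eq_integral_mul_sq (hf_nonneg : ∀ x, 0 ≤ f x) (hf_prob : ∫ x, f x = 1)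
    (hf_int : ∀ t : ℝ, 0 < t → Integrable (fun x => f x ^ t)) :
    varentropy f = ∫ x, f x * (-log (f x) - entropy f) ^ 2 := by
  have i0 : Integrable f := by simpa using integrable_mul_log_pow hf_nonneg hf_int 0
  have i1 : Integrable fun x => f x * log (f x) := by
    simpa using integrable_mul_log_pow hf_nonneg hf_int 1
  have i2 := integrable_mul_log_pow hf_nonneg hf_int 2
  have : (fun x => f x * (-log (f x) - entropy f) ^ 2) = fun x => f x * log (f x) ^ 2
      + 2 * entropy f * (f x * log (f x)) + entropy f ^ 2 * f x := funext fun x => by ring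
  rw [this, integral_add, integral_add, integral_const_mul, integral_const_mul, hf_prob,
    varentropy, entropy]
  · ring
  exacts [i2, i1.const_mul _, i2.add (i1.const_mul _), i0.const_mul _]

lemma varentropy_nonneg (hf_nonneg : ∀ x, 0 ≤ f x) (hf_prob : ∫ x, f x = 1)
    (hf_int : ∀ t : ℝ, 0 < t → Integrable (fun x => f x ^ t)) : 0 ≤ varentropy f := by
  rw [varentropy_eq_integral_mul_sq hf_nonneg hf_prob hf_int]
  exact integral_nonneg fun x => mul_nonneg (hf_nonneg x) (sq_nonneg _)

lemma lintegral_mul_exp_eq_one_of_varentropy_nonpos (hf_nonneg : ∀ x, 0 ≤ f x)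
    (hf_prob : ∫ x, f x = 1) (hf_int : ∀ t : ℝ, 0 < t → Integrable (fun x => f x ^ t))
    (hV : varentropy f ≤ 0) (β : ℝ) :
    ∫⁻ x, ENNReal.ofReal (f x * exp (β * (-log (f x) - entropy f))) = 1 := by
  rw [varentropy_eq_integral_mul_sq hf_nonneg hf_prob hf_int] at hV
  have hsq_nonneg : 0 ≤ fun x => f x * (-log (f x) - entropy f) ^ 2 := fun x =>
    mul_nonneg (hf_nonneg x) (sq_nonneg _)
  have hsq_zero := (integral_eq_zero_iff_of_nonneg hsq_nonneg
    (integrable_mul_neg_log_sub_sq hf_nonneg hf_int _)).1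
    (le_antisymm hV (integral_nonneg hsq_nonneg))
  have hae : ∀ᵐ x, ENNReal.ofReal (f x * exp (β * (-log (f x) - entropy f)))
      = ENNReal.ofReal (f x) := by
    filter_upwards [hsq_zero] with x hx
    rcases mul_eq_zero.1 hx with h | h
    · simp [h]
    · simp [pow_eq_zero_iff two_ne_zero |>.1 h]
  rw [lintegral_congr_ae hae, ← ofReal_integral_eq_lintegral_ofReal
    (by simpa using hf_int 1 one_pos) (ae_of_all _ hf_nonneg), hf_prob, ENNReal.ofReal_one]

lemma log_integral_rpow_le (hf_nonneg : ∀ x, 0 ≤ f x) (hf_prob : ∫ x, f x = 1)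
    (hf_int : ∀ t : ℝ, 0 < t → Integrable (fun x => f x ^ t)) {K : ℝ}
    (hV : ∀ t : ℝ, 0 < t → varentropy (tilt f t) ≤ K) {α : ℝ} (hα : 0 < α) :
    log (∫ x, f x ^ α) ≤ (1 - α) * entropy f + K * (α - 1 - log α) := by
  have hf_pos : 0 < ∫ x, f x := hf_prob ▸ one_pos
  have := le_tangent_add_of_deriv2_le_div_sq
    (fun t ht => hasDerivAt_log_integral_rpow hf_nonneg hf_int hf_pos ht)
    (fun t ht => hasDerivAt_integral_rpow_mul_log_div hf_nonneg hf_int hf_pos ht)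
    (fun t ht => by
      rw [le_div_iff₀ (by positivity), mul_comm]
      exact varentropy_tilt hf_nonneg hf_int hf_pos ht ▸ hV t ht) hα
  simp only [rpow_one, hf_prob, log_one, div_one] at this
  rw [entropy]
  linarith

lemma lintegral_mul_exp_le_of_lt_one (hf_nonneg : ∀ x, 0 ≤ f x) (hf_prob : ∫ x, f x = 1)
    (hf_int : ∀ t : ℝ, 0 < t → Integrable (fun x => f x ^ t)) {K : ℝ}
    (hV : ∀ t : ℝ, 0 < t → varentropy (tilt f t) ≤ K) {β : ℝ} (hβ : β < 1) :
    ∫⁻ x, ENNReal.ofReal (f x * exp (β * (-log (f x) - entropy f)))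
      ≤ ENNReal.ofReal (exp (K * (-β - log (1 - β)))) := by
  have hα : 0 < 1 - β := sub_pos.2 hβ
  have hM := integral_rpow_pos hf_nonneg hf_int (hf_prob ▸ one_pos) hα
  simp only [mul_exp_mul_neg_log_sub _ (hf_nonneg _) hβ.ne]
  rw [← ofReal_integral_eq_lintegral_ofReal ((hf_int _ hα).const_mul _)
    (ae_of_all _ fun x => mul_nonneg (exp_pos _).le (rpow_nonneg (hf_nonneg x) _)),
    integral_const_mul, ← exp_log hM, ← exp_add]
  gcongr
  linarith [log_integral_rpow_le hf_nonneg hf_prob hf_int hV hα]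

end Density

theorem mgf_information_content_le_general {n : ℕ} (f : (Fin n → ℝ) → ℝ)
    (hf_nonneg : ∀ x, 0 ≤ f x)
    (hf_prob : ∫ x, f x = 1)
    (hf_Lp : ∀ α : ℝ, 0 < α → Integrable (fun x => f x ^ α))
    (K : ℝ) (hK : IsLUB ((fun α => varentropy (tilt f α)) '' Set.Ioi 0) K) :
    ∀ β : ℝ,
      (∫⁻ x, ENNReal.ofReal (f x * Real.exp (β * (-Real.log (f x) - entropy f))))
        ≤ EReal.exp ((K : EReal) * rate (-β)) := by
  intro β
  have hV : ∀ t : ℝ, 0 < t → varentropy (tilt f t) ≤ K := fun t ht => hK.1 ⟨t, ht, rfl⟩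
  rcases lt_or_ge β 1 with hβ | hβ
  · rw [rate, if_pos (by linarith), ← sub_eq_add_neg, ← EReal.coe_mul, EReal.exp_coe]
    exact lintegral_mul_exp_le_of_lt_one hf_nonneg hf_prob hf_Lp hV hβ
  · have hV1 : varentropy f ≤ K := tilt_one hf_prob ▸ hV 1 one_pos
    rw [rate, if_neg (by linarith)]
    rcases ((varentropy_nonneg hf_nonneg hf_prob hf_Lp).trans hV1).eq_or_lt with rfl | hK_pos
    · simp [lintegral_mul_exp_eq_one_of_varentropy_nonpos hf_nonneg hf_prob hf_Lp hV1 β]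
    · simp [EReal.coe_mul_top_of_pos hK_pos]

/-- **Bootstrapping varentropy bounds to exponential deviation bounds**:
if `X` has density `f` on `ℝⁿ` with `f ∈ L^α(ℝⁿ)` for all `α > 0`, and
`K = sup_{α>0} V(X_α)` where `X_α` has the tilted density `f_α`, then for all `β ∈ ℝ`,
`E[e^{β(h̃(X) - h(X))}] ≤ e^{K r(-β)}`, where `h̃(X) = -log f(X)` and `h(X) = E[h̃(X)]`. -/
theorem mgf_information_content_le {n : ℕ} (f : (Fin n → ℝ) → ℝ)
    (hf_meas : Measurable f) (hf_nonneg : ∀ x, 0 ≤ f x)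
    (hf_prob : ∫ x, f x = 1)
    (hf_Lp : ∀ α : ℝ, 0 < α → Integrable (fun x => f x ^ α))
    (K : ℝ) (hK : IsLUB ((fun α => varentropy (tilt f α)) '' Set.Ioi 0) K) :
    ∀ β : ℝ,
      (∫⁻ x, ENNReal.ofReal (f x * Real.exp (β * (-Real.log (f x) - entropy f))))
        ≤ EReal.exp ((K : EReal) * rate (-β)) :=
  mgf_information_content_le_general f hf_nonneg hf_prob hf_Lp K hK
end
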